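/- Fix n, d ∈ ℕ, a temperature τ > 0, and a bound b > 0. Let Attn(Q, K) denote the n × n matrix obtained by applying softmax to each row of Q Kᵀ / τ, where Q, K are real n × d matrices. If Q₁, Q₂, K₁, K₂ all have operator norm at most b, then ‖Attn(Q₁, K₁) − Attn(Q₂, K₂)‖_F ≤ (b/τ) * (‖Q₁ − Q₂‖_F + ‖K₁ − K₂‖_F), where ‖·‖_F is the Frobenius norm. In particular, on the operator-norm ball of radius b, the map (Q, K) ↦ Attn(Q, K) is Lipschitz in Frobenius norm with constant b/τ in each argument. -/

import Mathlib

open scoped BigOperators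

/-- The softmax map on `ℝⁿ`: `softmax x i = exp (x i) / ∑ j, exp (x j)`. -/
noncomputable def softmax {n : ℕ} (x : Fin n → ℝ) : Fin n → ℝ :=
  fun i => Real.exp (x i) / ∑ j, Real.exp (x j)

/-- The attention map with temperature `τ`: rowwise softmax of `Q Kᵀ / τ`. -/
noncomputable def attn {n d : ℕ} (τ : ℝ) (Q K : Matrix (Fin n) (Fin d) ℝ) :
    Matrix (Fin n) (Fin n) ℝ :=
  fun i => softmax (fun j => (Q * K.transpose) i j / τ)

/-- The Frobenius norm of a real (rectangular) matrix. -/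
noncomputable def frobeniusNorm {m k : ℕ} (M : Matrix (Fin m) (Fin k) ℝ) : ℝ :=
  Real.sqrt (∑ i, ∑ j, (M i j) ^ 2)

/-- The operator (spectral) norm of a real (rectangular) matrix: its largest singular
value, i.e. the square root of the largest eigenvalue of `Mᵀ M`. -/
noncomputable def operatorNorm {m k : ℕ} (M : Matrix (Fin m) (Fin k) ℝ) : ℝ :=
  ⨆ i, Real.sqrt ((Matrix.isHermitian_conjTranspose_mul_self M).eigenvalues i)

/-!
Softmax is 1-Lipschitz for the Euclidean norm: its Jacobian at `x` sends `v` to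
`(pᵢ (vᵢ - ⟨p, v⟩))ᵢ` with `p = softmax x`, and since `pᵢ² ≤ pᵢ` the squared norm of this vector
is at most the `p`-variance of `v`, hence at most `‖v‖²`. Applied row by row, this bounds
`‖Attn(Q₁, K₁) - Attn(Q₂, K₂)‖_F` by `‖Q₁K₁ᵀ - Q₂K₂ᵀ‖_F / τ`. Finally
`Q₁K₁ᵀ - Q₂K₂ᵀ = (Q₁ - Q₂)K₁ᵀ + Q₂(K₁ - K₂)ᵀ`, and `‖A Bᵀ‖_F ≤ ‖B‖_op ‖A‖_F` because
`BᵀB ≤ ‖B‖_op² • 1` in the Loewner order.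
-/

open Matrix WithLp

lemma sum_sq_mul_sub_weightedMean_le {ι : Type*} [Fintype ι] {p : ι → ℝ} (hp : ∀ i, 0 ≤ p i)
    (hp_sum : ∑ i, p i = 1) (v : ι → ℝ) :
    ∑ i, (p i * (v i - ∑ j, p j * v j)) ^ 2 ≤ ∑ i, v i ^ 2 := by
  set m := ∑ j, p j * v j with hm
  have hp_le_one (i : ι) : p i ≤ 1 :=
    hp_sum ▸ Finset.single_le_sum (fun j _ => hp j) (Finset.mem_univ i)
  have hvar : ∑ i, p i * (v i - m) ^ 2 = ∑ i, p i * v i ^ 2 - m ^ 2 := by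
    have h (i : ι) : p i * (v i - m) ^ 2 = p i * v i ^ 2 - 2 * m * (p i * v i) + m ^ 2 * p i := by
      ring
    simp only [h, Finset.sum_add_distrib, Finset.sum_sub_distrib, ← Finset.mul_sum, hp_sum, ← hm]
    ring
  calc ∑ i, (p i * (v i - m)) ^ 2 ≤ ∑ i, p i * (v i - m) ^ 2 := by
        refine Finset.sum_le_sum fun i _ => ?_
        rw [mul_pow]
        exact mul_le_mul_of_nonneg_right (pow_le_of_le_one (hp i) (hp_le_one i) two_ne_zero)
          (sq_nonneg _)
    _ ≤ ∑ i, p i * v i ^ 2 := by rw [hvar]; linarith [sq_nonneg m]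
    _ ≤ ∑ i, v i ^ 2 := by
        gcongr with i
        exact mul_le_of_le_one_left (sq_nonneg _) (hp_le_one i)

section Softmax

variable {n : ℕ}

lemma softmax_nonneg (x : Fin n → ℝ) (i : Fin n) : 0 ≤ softmax x i := by
  unfold softmax
  positivity

lemma sum_exp_pos [NeZero n] (x : Fin n → ℝ) : 0 < ∑ j, Real.exp (x j) :=
  Finset.sum_pos (fun _ _ => Real.exp_pos _) Finset.univ_nonempty

lemma sum_softmax [NeZero n] (x : Fin n → ℝ) : ∑ i, softmax x i = 1 := by
  simp only [softmax]
  rw [← Finset.sum_div, div_self (sum_exp_pos x).ne']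

noncomputable def softmaxFDeriv (x : Fin n → ℝ) : (Fin n → ℝ) →L[ℝ] (Fin n → ℝ) :=
  .pi fun i => softmax x i • (.proj i - ∑ j, softmax x j • .proj j)

lemma softmaxFDeriv_apply (x v : Fin n → ℝ) (i : Fin n) :
    softmaxFDeriv x v i = softmax x i * (v i - ∑ j, softmax x j * v j) := by
  simp [softmaxFDeriv]

lemma hasFDerivAt_softmax [NeZero n] (x : Fin n → ℝ) :
    HasFDerivAt softmax (softmaxFDeriv x) x := by
  have hS : HasFDerivAt (fun y : Fin n → ℝ => ∑ j, Real.exp (y j))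
      (∑ j, Real.exp (x j) • .proj j) x :=
    .fun_sum fun j _ => (hasFDerivAt_apply j x).exp
  refine hasFDerivAt_pi.2 fun i => ?_
  have hquot := ((hasFDerivAt_apply i x).exp).mul
    ((hasDerivAt_inv (sum_exp_pos x).ne').comp_hasFDerivAt x hS)
  refine (hquot.congr_fderiv ?_).congr_of_eventuallyEq
    (.of_forall fun y => div_eq_mul_inv _ _)
  ext v
  have hsum_ne := (sum_exp_pos x).ne'
  simp only [neg_smul, smul_neg, Function.comp_apply, _root_.add_apply, _root_.neg_apply,
    _root_.smul_apply, _root_.sum_apply, ContinuousLinearMap.proj_apply, smul_eq_mul, softmax,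
    _root_.sub_apply, div_mul_eq_mul_div, ← Finset.sum_div]
  field_simp
  ring

lemma norm_softmaxFDeriv_apply_le [NeZero n] (x v : Fin n → ℝ) :
    ‖toLp 2 (softmaxFDeriv x v)‖ ≤ ‖toLp 2 v‖ := by
  simp only [EuclideanSpace.norm_eq, Real.norm_eq_abs, sq_abs, softmaxFDeriv_apply]
  exact Real.sqrt_le_sqrt (sum_sq_mul_sub_weightedMean_le (softmax_nonneg x) (sum_softmax x) v)

lemma lipschitzWith_softmax :
    LipschitzWith 1 fun x : EuclideanSpace ℝ (Fin n) => toLp 2 (softmax (ofLp x)) := by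
  rcases n.eq_zero_or_pos with rfl | hn
  · exact fun x y => by simp [Subsingleton.elim x y]
  have : NeZero n := ⟨hn.ne'⟩
  have hderiv (x : EuclideanSpace ℝ (Fin n)) : HasFDerivAt (fun x => toLp 2 (softmax (ofLp x)))
      ((PiLp.continuousLinearEquiv 2 ℝ _).symm.toContinuousLinearMap ∘L
        softmaxFDeriv (ofLp x) ∘L (PiLp.continuousLinearEquiv 2 ℝ _).toContinuousLinearMap) x :=
    (PiLp.hasFDerivAt_toLp 2 _).comp x ((hasFDerivAt_softmax _).comp x (PiLp.hasFDerivAt_ofLp 2 x))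
  refine lipschitzOnWith_univ.mp (convex_univ.lipschitzOnWith_of_nnnorm_hasFDerivWithin_le
    (fun x _ => (hderiv x).hasFDerivWithinAt) fun x _ => ?_)
  refine ContinuousLinearMap.opNNNorm_le_bound _ _ fun v => ?_
  rw [one_mul, ← NNReal.coe_le_coe]
  exact norm_softmaxFDeriv_apply_le (ofLp x) (ofLp v)

lemma norm_softmax_sub_softmax_le (x y : Fin n → ℝ) :
    ‖toLp 2 (softmax x - softmax y)‖ ≤ ‖toLp 2 (x - y)‖ := by
  simpa [dist_eq_norm, ← toLp_sub] using lipschitzWith_softmax.dist_le_mul (toLp 2 x) (toLp 2 y)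

end Softmax

section FrobeniusNorm

variable {m k : ℕ}

lemma frobeniusNorm_nonneg (A : Matrix (Fin m) (Fin k) ℝ) : 0 ≤ frobeniusNorm A :=
  Real.sqrt_nonneg _

lemma frobeniusNorm_eq_sqrt_sum_norm_row_sq (A : Matrix (Fin m) (Fin k) ℝ) :
    frobeniusNorm A = √(∑ i, ‖toLp 2 (A i)‖ ^ 2) := by
  simp only [frobeniusNorm, EuclideanSpace.norm_sq_eq, Real.norm_eq_abs, sq_abs]

lemma frobeniusNorm_le_mul_of_norm_row_le {l : ℕ} {A : Matrix (Fin m) (Fin k) ℝ}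
    {B : Matrix (Fin m) (Fin l) ℝ} {c : ℝ} (hc : 0 ≤ c)
    (h : ∀ i, ‖toLp 2 (A i)‖ ≤ c * ‖toLp 2 (B i)‖) : frobeniusNorm A ≤ c * frobeniusNorm B := by
  simp only [frobeniusNorm_eq_sqrt_sum_norm_row_sq]
  rw [← Real.sqrt_sq hc, ← Real.sqrt_mul (sq_nonneg c), Finset.mul_sum]
  gcongr with i
  rw [← mul_pow]
  exact pow_le_pow_left₀ (norm_nonneg _) (h i) 2

open scoped Matrix.Norms.Frobenius in
lemma frobeniusNorm_eq_norm (A : Matrix (Fin m) (Fin k) ℝ) : frobeniusNorm A = ‖A‖ := by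
  simp only [frobeniusNorm, frobenius_norm_def, Real.norm_eq_abs, Real.rpow_two, sq_abs,
    Real.sqrt_eq_rpow]

open scoped Matrix.Norms.Frobenius in
lemma frobeniusNorm_add_le (A B : Matrix (Fin m) (Fin k) ℝ) :
    frobeniusNorm (A + B) ≤ frobeniusNorm A + frobeniusNorm B := by
  simpa only [frobeniusNorm_eq_norm] using norm_add_le A B

open scoped Matrix.Norms.Frobenius in
lemma frobeniusNorm_transpose (A : Matrix (Fin m) (Fin k) ℝ) :
    frobeniusNorm Aᵀ = frobeniusNorm A := by
  simpa only [frobeniusNorm_eq_norm] using frobenius_norm_transpose A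

open scoped Matrix.Norms.Frobenius in
lemma frobeniusNorm_smul (c : ℝ) (A : Matrix (Fin m) (Fin k) ℝ) :
    frobeniusNorm (c • A) = |c| * frobeniusNorm A := by
  simpa only [frobeniusNorm_eq_norm, Real.norm_eq_abs] using norm_smul c A

end FrobeniusNorm

section OperatorNorm

open scoped MatrixOrder

variable {m k : ℕ}

lemma operatorNorm_nonneg (M : Matrix (Fin m) (Fin k) ℝ) : 0 ≤ operatorNorm M :=
  Real.iSup_nonneg fun _ => Real.sqrt_nonneg _

lemma eigenvalues_conjTranspose_mul_self_le_operatorNorm_sq (M : Matrix (Fin m) (Fin k) ℝ)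
    (j : Fin k) : (isHermitian_conjTranspose_mul_self M).eigenvalues j ≤ operatorNorm M ^ 2 := by
  rw [← Real.sq_sqrt ((posSemidef_conjTranspose_mul_self M).eigenvalues_nonneg j)]
  gcongr
  exact le_ciSup (f := fun i => √((isHermitian_conjTranspose_mul_self M).eigenvalues i))
    (Set.finite_range _).bddAbove j

lemma conjTranspose_mul_self_le_operatorNorm_sq (M : Matrix (Fin m) (Fin k) ℝ) :
    Mᴴ * M ≤ algebraMap ℝ _ (operatorNorm M ^ 2) := by
  refine le_algebraMap_of_spectrum_le (fun x hx => ?_)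
    (isHermitian_conjTranspose_mul_self M).isSelfAdjoint
  rw [(isHermitian_conjTranspose_mul_self M).spectrum_real_eq_range_eigenvalues] at hx
  obtain ⟨j, rfl⟩ := hx
  exact eigenvalues_conjTranspose_mul_self_le_operatorNorm_sq M j

lemma norm_mulVec_le_operatorNorm_mul (M : Matrix (Fin m) (Fin k) ℝ) (v : Fin k → ℝ) :
    ‖toLp 2 (M *ᵥ v)‖ ≤ operatorNorm M * ‖toLp 2 v‖ := by
  have hnorm {ι : Type} [Fintype ι] (w : ι → ℝ) : ‖toLp 2 w‖ ^ 2 = w ⬝ᵥ w := by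
    rw [← real_inner_self_eq_norm_sq, EuclideanSpace.inner_toLp_toLp, star_trivial]
  have h := (le_iff.mp (conjTranspose_mul_self_le_operatorNorm_sq M)).dotProduct_mulVec_nonneg v
  rw [Algebra.algebraMap_eq_smul_one, sub_mulVec, smul_mulVec, one_mulVec, dotProduct_sub,
    ← mulVec_mulVec, dotProduct_mulVec, star_trivial, conjTranspose_eq_transpose_of_trivial,
    vecMul_transpose, dotProduct_smul, sub_nonneg, ← hnorm, ← hnorm, smul_eq_mul, ← mul_pow] at h
  exact le_of_pow_le_pow_left₀ two_ne_zero
    (mul_nonneg (operatorNorm_nonneg M) (norm_nonneg _)) h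

end OperatorNorm

section Product

variable {r s k : ℕ}

lemma frobeniusNorm_mul_transpose_le (A : Matrix (Fin r) (Fin k) ℝ)
    (B : Matrix (Fin s) (Fin k) ℝ) : frobeniusNorm (A * Bᵀ) ≤ operatorNorm B * frobeniusNorm A :=
  frobeniusNorm_le_mul_of_norm_row_le (operatorNorm_nonneg B) fun i => by
    rw [mul_apply_eq_vecMul, vecMul_transpose]
    exact norm_mulVec_le_operatorNorm_mul B (A i)

lemma frobeniusNorm_mul_transpose_le' (A : Matrix (Fin r) (Fin k) ℝ)
    (B : Matrix (Fin s) (Fin k) ℝ) : frobeniusNorm (A * Bᵀ) ≤ operatorNorm A * frobeniusNorm B := by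
  rw [← frobeniusNorm_transpose, transpose_mul, transpose_transpose]
  exact frobeniusNorm_mul_transpose_le B A

end Product

section Attention

noncomputable def rowSoftmax {m n : ℕ} (S : Matrix (Fin m) (Fin n) ℝ) : Matrix (Fin m) (Fin n) ℝ :=
  of fun i => softmax (S i)

lemma frobeniusNorm_rowSoftmax_sub_le {m n : ℕ} (S T : Matrix (Fin m) (Fin n) ℝ) :
    frobeniusNorm (rowSoftmax S - rowSoftmax T) ≤ frobeniusNorm (S - T) := by
  simpa only [one_mul] using frobeniusNorm_le_mul_of_norm_row_le zero_le_one fun i => by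
    rw [one_mul]
    exact norm_softmax_sub_softmax_le (S i) (T i)

lemma attn_eq_rowSoftmax {n d : ℕ} (τ : ℝ) (Q K : Matrix (Fin n) (Fin d) ℝ) :
    attn τ Q K = rowSoftmax (τ⁻¹ • (Q * Kᵀ)) := by
  ext i j
  simp only [attn, rowSoftmax, of_apply, div_eq_inv_mul]
  rfl

lemma frobeniusNorm_attn_sub_le {n d : ℕ} (τ : ℝ) (Q₁ K₁ Q₂ K₂ : Matrix (Fin n) (Fin d) ℝ) :
    frobeniusNorm (attn τ Q₁ K₁ - attn τ Q₂ K₂) ≤ frobeniusNorm (Q₁ * K₁ᵀ - Q₂ * K₂ᵀ) / |τ| := by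
  rw [attn_eq_rowSoftmax, attn_eq_rowSoftmax, div_eq_inv_mul, ← abs_inv, ← frobeniusNorm_smul,
    smul_sub]
  exact frobeniusNorm_rowSoftmax_sub_le _ _

end Attention

theorem attn_lipschitz_on_opNorm_ball_general {n d : ℕ} (τ b : ℝ) (hτ : 0 < τ)
    (Q₁ Q₂ K₁ K₂ : Matrix (Fin n) (Fin d) ℝ)
    (hQ₂ : operatorNorm Q₂ ≤ b)
    (hK₁ : operatorNorm K₁ ≤ b) :
    frobeniusNorm (attn τ Q₁ K₁ - attn τ Q₂ K₂) ≤
      (b / τ) * (frobeniusNorm (Q₁ - Q₂) + frobeniusNorm (K₁ - K₂)) := by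
  have hsplit : Q₁ * K₁ᵀ - Q₂ * K₂ᵀ = (Q₁ - Q₂) * K₁ᵀ + Q₂ * (K₁ - K₂)ᵀ := by
    rw [transpose_sub, Matrix.sub_mul, Matrix.mul_sub]
    abel
  calc frobeniusNorm (attn τ Q₁ K₁ - attn τ Q₂ K₂)
      ≤ frobeniusNorm (Q₁ * K₁ᵀ - Q₂ * K₂ᵀ) / τ := by
        simpa only [abs_of_pos hτ] using frobeniusNorm_attn_sub_le τ Q₁ K₁ Q₂ K₂
    _ ≤ (operatorNorm K₁ * frobeniusNorm (Q₁ - Q₂) +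
          operatorNorm Q₂ * frobeniusNorm (K₁ - K₂)) / τ := by
        rw [hsplit]
        gcongr
        exact (frobeniusNorm_add_le _ _).trans (add_le_add
          (frobeniusNorm_mul_transpose_le _ _) (frobeniusNorm_mul_transpose_le' _ _))
    _ ≤ (b * frobeniusNorm (Q₁ - Q₂) + b * frobeniusNorm (K₁ - K₂)) / τ := by
        gcongr
        · exact frobeniusNorm_nonneg _
        · exact frobeniusNorm_nonneg _
    _ = (b / τ) * (frobeniusNorm (Q₁ - Q₂) + frobeniusNorm (K₁ - K₂)) := by ring

/-- **Lipschitzness of the attention map on an operator-norm ball.**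
If `Q₁, Q₂, K₁, K₂ ∈ ℝ^{n × d}` have operator norm at most `b` and `τ > 0`, then
`‖Attn(Q₁, K₁) − Attn(Q₂, K₂)‖_F ≤ (b/τ) * (‖Q₁ − Q₂‖_F + ‖K₁ − K₂‖_F)`. -/
theorem attn_lipschitz_on_opNorm_ball {n d : ℕ} (τ b : ℝ) (hτ : 0 < τ) (hb : 0 < b)
    (Q₁ Q₂ K₁ K₂ : Matrix (Fin n) (Fin d) ℝ)
    (hQ₁ : operatorNorm Q₁ ≤ b) (hQ₂ : operatorNorm Q₂ ≤ b)
    (hK₁ : operatorNorm K₁ ≤ b) (hK₂ : operatorNorm K₂ ≤ b) :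
    frobeniusNorm (attn τ Q₁ K₁ - attn τ Q₂ K₂) ≤
      (b / τ) * (frobeniusNorm (Q₁ - Q₂) + frobeniusNorm (K₁ - K₂)) :=
  attn_lipschitz_on_opNorm_ball_general τ b hτ Q₁ Q₂ K₁ K₂ hQ₂ hK₁
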